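/- arXiv:1504.08194 — 2 statements merged into one kernel-verified Lean document; each statement's English description precedes it below -/
import Mathlib

section
/- Let V_a and V_b be real vector spaces, let n_a, n_b ≥ 0, let ω_a be a nonzero nondegenerate alternating (n_a+1)-form on V_a and ω_b a nonzero nondegenerate alternating (n_b+1)-form on V_b. Then the alternating (n_a+n_b+2)-form ω := (pr_a^*ω_a) ∧ (pr_b^*ω_b) on V_a × V_b is nondegenerate: for every v ∈ V_a × V_b, if ι_v ω = 0 then v = 0. (This is the pointwise linear-algebra content of the paper's claim that the product of two multisymplectic manifolds, endowed with the wedge product of the multisymplectic forms, is again multisymplectic.) -/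
/-!
Test the interior product only against tuples of pure vectors `(x, 0)` and `(0, y)`. A shuffle
is determined by where it sends either of its two blocks, and a shuffle whose `ω_a`-block meets
a pure `V_b`-vector (or whose `ω_b`-block meets a pure `V_a`-vector) contributes zero. So for
such tuples the shuffle sum collapses to one term, `± ω_a(v_a, u) ω_b(w)` resp.
`± ω_a(z) ω_b(v_b, u)`. Choosing `w`, `z` with `ω_b(w) ≠ 0 ≠ ω_a(z)` shows that `v_a` and `v_b`
are degenerate for `ω_a` and `ω_b`, hence zero.
-/

/-- A `(p,q)`-shuffle: a permutation of `Fin (p+q)` that is increasing on the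
first block of size `p` and on the last block of size `q`. -/
def IsShuffle (p q : ℕ) (σ : Equiv.Perm (Fin (p + q))) : Prop :=
  (∀ i j : Fin p, i < j → σ (Fin.castAdd q i) < σ (Fin.castAdd q j)) ∧
  (∀ i j : Fin q, i < j → σ (Fin.natAdd p i) < σ (Fin.natAdd p j))

open Classical in
/-- The wedge product of a `p`-form and a `q`-form (given as functions on tuples),
defined by the sum over `(p,q)`-shuffles of the context. -/
noncomputable def wedgeFun {V : Type*} {p q : ℕ}
    (α : (Fin p → V) → ℝ) (β : (Fin q → V) → ℝ) :
    (Fin (p + q) → V) → ℝ := fun v =>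
  ∑ σ : Equiv.Perm (Fin (p + q)),
    if IsShuffle p q σ then
      ((Equiv.Perm.sign σ : ℤ) : ℝ) *
        (α (fun i => v (σ (Fin.castAdd q i))) * β (fun j => v (σ (Fin.natAdd p j))))
    else 0

theorem StrictMono.eq_of_range_subset {ι β : Type*} [Fintype ι] [LinearOrder ι] [Preorder β]
    {f g : ι → β} (hf : StrictMono f) (hg : StrictMono g) (h : Set.range f ⊆ Set.range g) :
    f = g := by
  classical
  refine (hf.range_inj hg).1 (Set.eq_of_subset_of_card_le h ?_)
  rw [Set.card_range_of_injective hf.injective, Set.card_range_of_injective hg.injective]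

namespace Fin

variable {α : Type*}

theorem cons_comp_cast {k l : ℕ} (h : k = l) (a : α) (g : Fin l → α) :
    cons a (g ∘ Fin.cast h) = cons a g ∘ Fin.cast (congrArg (· + 1) h) := by
  subst h
  rfl

theorem cons_cast_append_eq_append_cons {m n : ℕ} (a : α) (x : Fin m → α) (y : Fin (n + 1) → α)
    (h₁ : m + 1 + n = m + (n + 1)) (h₂ : m + 1 + (n + 1) = m + 1 + n + 1) :
    (fun i => (cons a (append x y ∘ Fin.cast h₁) : Fin (m + 1 + n + 1) → α) (Fin.cast h₂ i)) =
      append (cons a x) y := by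
  rw [cons_comp_cast, append_cons]
  rfl

theorem cons_cast_append_eq_append_cons_comp_cycleRange_symm {m n : ℕ} (a : α)
    (x : Fin (m + 1) → α) (y : Fin n → α) (h : m + 1 + (n + 1) = m + 1 + n + 1) :
    (fun i => (cons a (append x y) : Fin (m + 1 + n + 1) → α) (Fin.cast h i)) =
      append x (cons a y) ∘ (cycleRange (natAdd (m + 1) 0)).symm := by
  rw [Equiv.eq_comp_symm]
  ext i
  induction i using addCases with
  | left i =>
    have : Fin.cast h (cycleRange (natAdd (m + 1) 0) (castAdd (n + 1) i)) = (castAdd n i).succ :=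
      Fin.ext (by rw [val_cast, coe_cycleRange_of_lt (by simp [Fin.lt_def]; omega)]; simp)
    simp only [Function.comp_apply, this, cons_succ, append_left]
  | right j =>
    induction j using Fin.cases with
    | zero => simp
    | succ j =>
      have : Fin.cast h (cycleRange (natAdd (m + 1) 0) (natAdd (m + 1) j.succ)) =
          (natAdd (m + 1) j).succ :=
        Fin.ext (by rw [val_cast, cycleRange_of_gt (by simp [Fin.lt_def])]; simp; omega)
      simp only [Function.comp_apply, this, cons_succ, append_right]

end Fin

namespace Equiv.Perm

variable {p q : ℕ} {σ τ : Perm (Fin (p + q))}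

theorem natAdd_mem_range_of_castAdd_eq (h : ∀ i, σ (Fin.castAdd q i) = τ (Fin.castAdd q i))
    (j : Fin q) : σ (Fin.natAdd p j) ∈ Set.range (τ ∘ Fin.natAdd p) := by
  obtain ⟨k, hk⟩ := τ.surjective (σ (Fin.natAdd p j))
  induction k using Fin.addCases with
  | left i => exact absurd (congrArg Fin.val (σ.injective ((h i).trans hk))) (by simp; omega)
  | right j' => exact ⟨j', hk⟩

theorem castAdd_mem_range_of_natAdd_eq (h : ∀ j, σ (Fin.natAdd p j) = τ (Fin.natAdd p j))
    (i : Fin p) : σ (Fin.castAdd q i) ∈ Set.range (τ ∘ Fin.castAdd q) := by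
  obtain ⟨k, hk⟩ := τ.surjective (σ (Fin.castAdd q i))
  induction k using Fin.addCases with
  | left i' => exact ⟨i', hk⟩
  | right j => exact absurd (congrArg Fin.val (σ.injective ((h j).trans hk))) (by simp; omega)

end Equiv.Perm

namespace IsShuffle

variable {p q : ℕ} {σ τ : Equiv.Perm (Fin (p + q))}

theorem strictMono_castAdd (hσ : IsShuffle p q σ) : StrictMono (σ ∘ Fin.castAdd q) := hσ.1

theorem strictMono_natAdd (hσ : IsShuffle p q σ) : StrictMono (σ ∘ Fin.natAdd p) := hσ.2

theorem one : IsShuffle p q 1 :=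
  ⟨Fin.strictMono_castAdd q, Fin.strictMono_natAdd p⟩

theorem cycleRange_natAdd_zero : IsShuffle p (q + 1) (Fin.cycleRange (Fin.natAdd p 0)) := by
  constructor
  · intro i j hij
    rw [Fin.lt_def, Fin.coe_cycleRange_of_lt (Fin.lt_def.2 (by simp)),
      Fin.coe_cycleRange_of_lt (Fin.lt_def.2 (by simp))]
    exact Nat.succ_lt_succ hij
  · intro i j hij
    induction j using Fin.cases with
    | zero => exact absurd hij (Fin.not_lt_zero i)
    | succ j =>
      have hfix (k : Fin q) : Fin.cycleRange (Fin.natAdd p 0) (Fin.natAdd p k.succ) =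
          Fin.natAdd p k.succ := Fin.cycleRange_of_gt (Fin.lt_def.2 (by simp))
      rw [hfix]
      induction i using Fin.cases with
      | zero => rw [Fin.lt_def, Fin.coe_cycleRange_of_le le_rfl, if_pos rfl]; simp
      | succ i => rwa [hfix, Fin.natAdd_lt_natAdd_iff]

theorem eq_of_castAdd_mem_range (hσ : IsShuffle p q σ) (hτ : IsShuffle p q τ)
    (h : ∀ i, σ (Fin.castAdd q i) ∈ Set.range (τ ∘ Fin.castAdd q)) : σ = τ := by
  have hc := hσ.strictMono_castAdd.eq_of_range_subset hτ.strictMono_castAdd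
    (Set.range_subset_iff.2 h)
  have hn := hσ.strictMono_natAdd.eq_of_range_subset hτ.strictMono_natAdd
    (Set.range_subset_iff.2 (Equiv.Perm.natAdd_mem_range_of_castAdd_eq (congrFun hc)))
  ext1 k
  induction k using Fin.addCases
  exacts [congrFun hc _, congrFun hn _]

theorem eq_of_natAdd_mem_range (hσ : IsShuffle p q σ) (hτ : IsShuffle p q τ)
    (h : ∀ j, σ (Fin.natAdd p j) ∈ Set.range (τ ∘ Fin.natAdd p)) : σ = τ := by
  have hn := hσ.strictMono_natAdd.eq_of_range_subset hτ.strictMono_natAdd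
    (Set.range_subset_iff.2 h)
  have hc := hσ.strictMono_castAdd.eq_of_range_subset hτ.strictMono_castAdd
    (Set.range_subset_iff.2 (Equiv.Perm.castAdd_mem_range_of_natAdd_eq (congrFun hn)))
  ext1 k
  induction k using Fin.addCases
  exacts [congrFun hc _, congrFun hn _]

variable {R M N : Type*} [Semiring R] [AddCommMonoid M] [Module R M] [AddCommMonoid N]
  [Module R N] {v : Fin (p + q) → M}

theorem eq_of_map_castAdd_ne_zero (hσ : IsShuffle p q σ) (hτ : IsShuffle p q τ)
    (f : M [⋀^Fin p]→ₗ[R] N) (hv : ∀ j, v (σ (Fin.natAdd p j)) = 0)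
    (h : f (v ∘ τ ∘ Fin.castAdd q) ≠ 0) : τ = σ := by
  refine hτ.eq_of_castAdd_mem_range hσ fun i => ?_
  obtain ⟨k, hk⟩ := σ.surjective (τ (Fin.castAdd q i))
  induction k using Fin.addCases with
  | left i' => exact ⟨i', hk⟩
  | right j => exact absurd (f.map_coord_zero i (by simp [← hk, hv])) h

theorem eq_of_map_natAdd_ne_zero (hσ : IsShuffle p q σ) (hτ : IsShuffle p q τ)
    (f : M [⋀^Fin q]→ₗ[R] N) (hv : ∀ i, v (σ (Fin.castAdd q i)) = 0)
    (h : f (v ∘ τ ∘ Fin.natAdd p) ≠ 0) : τ = σ := by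
  refine hτ.eq_of_natAdd_mem_range hσ fun j => ?_
  obtain ⟨k, hk⟩ := σ.surjective (τ (Fin.natAdd p j))
  induction k using Fin.addCases with
  | left i => exact absurd (f.map_coord_zero j (by simp [← hk, hv])) h
  | right j' => exact ⟨j', hk⟩

end IsShuffle

theorem wedgeFun_eq_single {V : Type*} {p q : ℕ} (α : (Fin p → V) → ℝ) (β : (Fin q → V) → ℝ)
    (v : Fin (p + q) → V) {σ₀ : Equiv.Perm (Fin (p + q))} (hσ₀ : IsShuffle p q σ₀)
    (h : ∀ σ, IsShuffle p q σ → α (v ∘ σ ∘ Fin.castAdd q) * β (v ∘ σ ∘ Fin.natAdd p) ≠ 0 →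
      σ = σ₀) :
    wedgeFun α β v =
      Equiv.Perm.sign σ₀ * (α (v ∘ σ₀ ∘ Fin.castAdd q) * β (v ∘ σ₀ ∘ Fin.natAdd p)) := by
  rw [wedgeFun, Finset.sum_eq_single σ₀ _ (by simp), if_pos hσ₀]
  · rfl
  intro σ _ hne
  split_ifs with hσ
  · exact mul_eq_zero_of_right _ (not_ne_iff.1 (mt (h σ hσ) hne))
  · rfl

section ProductForms

variable {Va Vb : Type*} [AddCommMonoid Va] [Module ℝ Va] [AddCommMonoid Vb] [Module ℝ Vb]
  {p q : ℕ}

theorem wedgeFun_pullback_eq_of_fst_eq_zero (ωa : Va [⋀^Fin p]→ₗ[ℝ] ℝ)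
    (ωb : Vb [⋀^Fin q]→ₗ[ℝ] ℝ) {σ₀ : Equiv.Perm (Fin (p + q))} (hσ₀ : IsShuffle p q σ₀)
    {T : Fin (p + q) → Va × Vb} (hT : ∀ j, (T (σ₀ (Fin.natAdd p j))).1 = 0) :
    wedgeFun (fun w : Fin p → Va × Vb => ωa fun i => (w i).1)
        (fun w : Fin q → Va × Vb => ωb fun j => (w j).2) T =
      Equiv.Perm.sign σ₀ * (ωa (fun i => (T (σ₀ (Fin.castAdd q i))).1) *
        ωb (fun j => (T (σ₀ (Fin.natAdd p j))).2)) :=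
  wedgeFun_eq_single _ _ T hσ₀ fun _ hσ hne =>
    hσ₀.eq_of_map_castAdd_ne_zero hσ ωa (v := Prod.fst ∘ T) hT (left_ne_zero_of_mul hne)

theorem wedgeFun_pullback_eq_of_snd_eq_zero (ωa : Va [⋀^Fin p]→ₗ[ℝ] ℝ)
    (ωb : Vb [⋀^Fin q]→ₗ[ℝ] ℝ) {σ₀ : Equiv.Perm (Fin (p + q))} (hσ₀ : IsShuffle p q σ₀)
    {T : Fin (p + q) → Va × Vb} (hT : ∀ i, (T (σ₀ (Fin.castAdd q i))).2 = 0) :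
    wedgeFun (fun w : Fin p → Va × Vb => ωa fun i => (w i).1)
        (fun w : Fin q → Va × Vb => ωb fun j => (w j).2) T =
      Equiv.Perm.sign σ₀ * (ωa (fun i => (T (σ₀ (Fin.castAdd q i))).1) *
        ωb (fun j => (T (σ₀ (Fin.natAdd p j))).2)) :=
  wedgeFun_eq_single _ _ T hσ₀ fun _ hσ hne =>
    hσ₀.eq_of_map_natAdd_ne_zero hσ ωb (v := Prod.snd ∘ T) hT (right_ne_zero_of_mul hne)

theorem wedgeFun_pullback_append_cons_left (ωa : Va [⋀^Fin (p + 1)]→ₗ[ℝ] ℝ)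
    (ωb : Vb [⋀^Fin q]→ₗ[ℝ] ℝ) (a : Va × Vb) (x : Fin p → Va) (y : Fin q → Vb) :
    wedgeFun (fun w : Fin (p + 1) → Va × Vb => ωa fun i => (w i).1)
        (fun w : Fin q → Va × Vb => ωb fun j => (w j).2)
        (Fin.append (Fin.cons a fun i => (x i, 0)) fun j => (0, y j)) =
      ωa (Fin.cons a.1 x) * ωb y := by
  rw [wedgeFun_pullback_eq_of_fst_eq_zero ωa ωb IsShuffle.one (by simp)]
  have hfst : (fun i => ((Fin.cons a fun i => (x i, 0) : Fin (p + 1) → Va × Vb) i).1) =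
      Fin.cons a.1 x := Fin.comp_cons Prod.fst a _
  simp [hfst]

theorem wedgeFun_pullback_append_cons_right (ωa : Va [⋀^Fin (p + 1)]→ₗ[ℝ] ℝ)
    (ωb : Vb [⋀^Fin (q + 1)]→ₗ[ℝ] ℝ) (a : Va × Vb) (x : Fin (p + 1) → Va) (y : Fin q → Vb) :
    wedgeFun (fun w : Fin (p + 1) → Va × Vb => ωa fun i => (w i).1)
        (fun w : Fin (q + 1) → Va × Vb => ωb fun j => (w j).2)
        ((Fin.append (fun i => (x i, 0)) (Fin.cons a fun j => (0, y j))) ∘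
          (Fin.cycleRange (Fin.natAdd (p + 1) (0 : Fin (q + 1)))).symm) =
      Equiv.Perm.sign (Fin.cycleRange (Fin.natAdd (p + 1) (0 : Fin (q + 1)))) *
        (ωa x * ωb (Fin.cons a.2 y)) := by
  rw [wedgeFun_pullback_eq_of_snd_eq_zero ωa ωb IsShuffle.cycleRange_natAdd_zero (by simp)]
  have hsnd : (fun j => ((Fin.cons a fun j => (0, y j) : Fin (q + 1) → Va × Vb) j).2) =
      Fin.cons a.2 y := Fin.comp_cons Prod.snd a _
  simp [hsnd]

end ProductForms

/-- The wedge product `(pr_a^*ω_a) ∧ (pr_b^*ω_b)` of nonzero nondegenerate alternating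
forms `ω_a`, `ω_b` is a nondegenerate alternating form on `V_a × V_b`. -/
theorem product_of_multisymplectic_is_nondegenerate
    {Va Vb : Type*} [AddCommGroup Va] [Module ℝ Va] [AddCommGroup Vb] [Module ℝ Vb]
    (na nb : ℕ)
    (ωa : AlternatingMap ℝ Va ℝ (Fin (na + 1)))
    (ωb : AlternatingMap ℝ Vb ℝ (Fin (nb + 1)))
    (hωa0 : ωa ≠ 0) (hωb0 : ωb ≠ 0)
    (hωa : ∀ v : Va, (∀ u : Fin na → Va, ωa (Fin.cons v u) = 0) → v = 0)
    (hωb : ∀ v : Vb, (∀ u : Fin nb → Vb, ωb (Fin.cons v u) = 0) → v = 0) :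
    ∀ v : Va × Vb,
      (∀ u : Fin (na + 1 + nb) → Va × Vb,
        wedgeFun (fun w : Fin (na + 1) → Va × Vb => ωa fun i => (w i).1)
                 (fun w : Fin (nb + 1) → Va × Vb => ωb fun j => (w j).2)
          (fun i => (Fin.cons v u : Fin (na + 1 + nb + 1) → Va × Vb)
            (Fin.cast (show na + 1 + (nb + 1) = na + 1 + nb + 1 by omega) i)) = 0) →
      v = 0 := by
  intro v hv
  obtain ⟨z, hz⟩ : ∃ z, ωa z ≠ 0 := by simpa using DFunLike.ne_iff.1 hωa0
  obtain ⟨w, hw⟩ : ∃ w, ωb w ≠ 0 := by simpa using DFunLike.ne_iff.1 hωb0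
  refine Prod.ext (hωa _ fun u => ?_) (hωb _ fun u => ?_)
  · have key := hv (Fin.append (fun i => (u i, 0)) (fun j => (0, w j)) ∘ Fin.cast (by omega))
    rw [Fin.cons_cast_append_eq_append_cons, wedgeFun_pullback_append_cons_left] at key
    exact (mul_eq_zero.1 key).resolve_right hw
  · have key := hv (Fin.append (fun i => (z i, 0)) (fun j => (0, u j)))
    rw [Fin.cons_cast_append_eq_append_cons_comp_cycleRange_symm,
      wedgeFun_pullback_append_cons_right] at key
    simpa [hz] using key
end

section
/- Let V be a finite-dimensional real inner product space and let J_1, J_2, J_3 : V → V be linear maps which are orthogonal (⟨J_i u, J_i v⟩ = ⟨u, v⟩ for all u, v) and satisfy the quaternionic relations J_i ∘ J_i = −id for i = 1, 2, 3 and J_1 ∘ J_2 ∘ J_3 = −id. For i = 1, 2, 3 let ω_i be the alternating 2-form on V defined by ω_i(u,v) = ⟨J_i u, v⟩. Then the alternating 4-form Ω := ω_1∧ω_1 + ω_2∧ω_2 + ω_3∧ω_3 is nondegenerate: for every v ∈ V, if ι_v Ω = 0 then v = 0. (This is the pointwise linear-algebra content of the paper's claim in Section 3.3 that Ω = Σ_i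 ω_i∧ω_i is a 3-plectic form on a Hyperkähler manifold.) -/
open scoped RealInnerProductSpace

instance (p q : ℕ) (σ : Equiv.Perm (Fin (p + q))) : Decidable (IsShuffle p q σ) :=
  inferInstanceAs (Decidable (_ ∧ _))

def sh1 : Equiv.Perm (Fin 4) := 1
def sh2 : Equiv.Perm (Fin 4) := ⟨![0,2,1,3], ![0,2,1,3], by decide, by decide⟩
def sh3 : Equiv.Perm (Fin 4) := ⟨![0,3,1,2], ![0,2,3,1], by decide, by decide⟩
def sh4 : Equiv.Perm (Fin 4) := ⟨![1,2,0,3], ![2,0,1,3], by decide, by decide⟩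
def sh5 : Equiv.Perm (Fin 4) := ⟨![1,3,0,2], ![2,0,3,1], by decide, by decide⟩
def sh6 : Equiv.Perm (Fin 4) := ⟨![2,3,0,1], ![2,3,0,1], by decide, by decide⟩

lemma shuffle22_iff : ∀ σ : Equiv.Perm (Fin (2+2)), IsShuffle 2 2 σ ↔
    σ ∈ ({sh1, sh2, sh3, sh4, sh5, sh6} : Finset (Equiv.Perm (Fin 4))) := by decide

lemma wedge22 {V : Type*} (α β : (Fin 2 → V) → ℝ) (v : Fin (2+2) → V) :
    wedgeFun α β v =
      α ![v 0, v 1] * β ![v 2, v 3] - α ![v 0, v 2] * β ![v 1, v 3]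
      + α ![v 0, v 3] * β ![v 1, v 2] + α ![v 1, v 2] * β ![v 0, v 3]
      - α ![v 1, v 3] * β ![v 0, v 2] + α ![v 2, v 3] * β ![v 0, v 1] := by
  rw [wedgeFun]
  have step : wedgeFun α β v = ∑ σ : Equiv.Perm (Fin (2+2)),
      (if σ ∈ ({sh1, sh2, sh3, sh4, sh5, sh6} : Finset (Equiv.Perm (Fin 4))) then
        ((Equiv.Perm.sign σ : ℤ) : ℝ) *
          (α (fun i => v (σ (Fin.castAdd 2 i))) * β (fun j => v (σ (Fin.natAdd 2 j))))
      else 0) := by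
    refine Finset.sum_congr rfl fun σ _ => ?_
    by_cases h : IsShuffle 2 2 σ
    · rw [if_pos h, if_pos ((shuffle22_iff σ).mp h)]
    · rw [if_neg h, if_neg (fun hm => h ((shuffle22_iff σ).mpr hm))]
  rw [← wedgeFun, step, Finset.sum_ite_mem, Finset.univ_inter]
  rw [show ({sh1, sh2, sh3, sh4, sh5, sh6} : Finset (Equiv.Perm (Fin 4)))
      = insert sh1 (insert sh2 (insert sh3 (insert sh4 (insert sh5 {sh6})))) from rfl]
  rw [Finset.sum_insert (by decide), Finset.sum_insert (by decide),
      Finset.sum_insert (by decide), Finset.sum_insert (by decide),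
      Finset.sum_insert (by decide), Finset.sum_singleton]
  have e1 : ∀ (s : Equiv.Perm (Fin 4)) (a b : Fin 4), s 0 = a → s 1 = b →
      (fun i : Fin 2 => v (s (Fin.castAdd 2 i))) = ![v a, v b] := by
    intro s a b ha hb; funext i; fin_cases i
    · show v (s 0) = v a; rw [ha]
    · show v (s 1) = v b; rw [hb]
  have e2 : ∀ (s : Equiv.Perm (Fin 4)) (a b : Fin 4), s 2 = a → s 3 = b →
      (fun j : Fin 2 => v (s (Fin.natAdd 2 j))) = ![v a, v b] := by
    intro s a b ha hb; funext j; fin_cases j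
    · show v (s 2) = v a; rw [ha]
    · show v (s 3) = v b; rw [hb]
  rw [e1 sh1 0 1 rfl rfl, e2 sh1 2 3 rfl rfl,
      e1 sh2 0 2 rfl rfl, e2 sh2 1 3 rfl rfl,
      e1 sh3 0 3 rfl rfl, e2 sh3 1 2 rfl rfl,
      e1 sh4 1 2 rfl rfl, e2 sh4 0 3 rfl rfl,
      e1 sh5 1 3 rfl rfl, e2 sh5 0 2 rfl rfl,
      e1 sh6 2 3 rfl rfl, e2 sh6 0 1 rfl rfl]
  have s1 : ((Equiv.Perm.sign sh1 : ℤ) : ℝ) = 1 := by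
    norm_num [show (Equiv.Perm.sign sh1 : ℤ) = 1 from by decide]
  have s2 : ((Equiv.Perm.sign sh2 : ℤ) : ℝ) = -1 := by
    norm_num [show (Equiv.Perm.sign sh2 : ℤ) = -1 from by decide]
  have s3 : ((Equiv.Perm.sign sh3 : ℤ) : ℝ) = 1 := by
    norm_num [show (Equiv.Perm.sign sh3 : ℤ) = 1 from by decide]
  have s4 : ((Equiv.Perm.sign sh4 : ℤ) : ℝ) = 1 := by
    norm_num [show (Equiv.Perm.sign sh4 : ℤ) = 1 from by decide]
  have s5 : ((Equiv.Perm.sign sh5 : ℤ) : ℝ) = -1 := by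
    norm_num [show (Equiv.Perm.sign sh5 : ℤ) = -1 from by decide]
  have s6 : ((Equiv.Perm.sign sh6 : ℤ) : ℝ) = 1 := by
    norm_num [show (Equiv.Perm.sign sh6 : ℤ) = 1 from by decide]
  rw [s1, s2, s3, s4, s5, s6]; ring

/-- On a finite-dimensional real inner product space with three orthogonal complex
structures `J₁, J₂, J₃` satisfying the quaternionic relations, the 4-form
`Ω = ω₁∧ω₁ + ω₂∧ω₂ + ω₃∧ω₃`, where `ω_i(u,v) = ⟨J_i u, v⟩`, is nondegenerate. -/
theorem hyperkahler_four_form_nondegenerate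
    {V : Type*} [NormedAddCommGroup V] [InnerProductSpace ℝ V] [FiniteDimensional ℝ V]
    (J1 J2 J3 : V →ₗ[ℝ] V)
    (ho1 : ∀ u v : V, ⟪J1 u, J1 v⟫ = ⟪u, v⟫)
    (ho2 : ∀ u v : V, ⟪J2 u, J2 v⟫ = ⟪u, v⟫)
    (ho3 : ∀ u v : V, ⟪J3 u, J3 v⟫ = ⟪u, v⟫)
    (h1 : J1 ∘ₗ J1 = -(LinearMap.id : V →ₗ[ℝ] V))
    (h2 : J2 ∘ₗ J2 = -(LinearMap.id : V →ₗ[ℝ] V))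
    (h3 : J3 ∘ₗ J3 = -(LinearMap.id : V →ₗ[ℝ] V))
    (h123 : J1 ∘ₗ (J2 ∘ₗ J3) = -(LinearMap.id : V →ₗ[ℝ] V)) :
    ∀ v : V,
      (∀ u : Fin 3 → V,
        wedgeFun (fun w : Fin 2 → V => ⟪J1 (w 0), w 1⟫)
                 (fun w : Fin 2 → V => ⟪J1 (w 0), w 1⟫)
            ((Fin.cons v u : Fin (3 + 1) → V) ∘ Fin.cast (show 2 + 2 = 3 + 1 by omega))
        + wedgeFun (fun w : Fin 2 → V => ⟪J2 (w 0), w 1⟫)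
                   (fun w : Fin 2 → V => ⟪J2 (w 0), w 1⟫)
            ((Fin.cons v u : Fin (3 + 1) → V) ∘ Fin.cast (show 2 + 2 = 3 + 1 by omega))
        + wedgeFun (fun w : Fin 2 → V => ⟪J3 (w 0), w 1⟫)
                   (fun w : Fin 2 → V => ⟪J3 (w 0), w 1⟫)
            ((Fin.cons v u : Fin (3 + 1) → V) ∘ Fin.cast (show 2 + 2 = 3 + 1 by omega)) = 0) →
      v = 0 := by
  intro v hv
  -- basic quaternionic identities
  have hJ1 : ∀ x, J1 (J1 x) = -x := by
    intro x; simpa using LinearMap.ext_iff.mp h1 x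
  have hJ2 : ∀ x, J2 (J2 x) = -x := by
    intro x; simpa using LinearMap.ext_iff.mp h2 x
  have hJ3 : ∀ x, J3 (J3 x) = -x := by
    intro x; simpa using LinearMap.ext_iff.mp h3 x
  have h123' : ∀ x, J1 (J2 (J3 x)) = -x := by
    intro x; simpa using LinearMap.ext_iff.mp h123 x
  have hq23 : ∀ x, J2 (J3 x) = J1 x := by
    intro x
    have h := congrArg J1 (h123' x)
    rw [hJ1 (J2 (J3 x)), map_neg] at h
    exact neg_injective h
  have hq13 : ∀ x, J1 (J3 x) = -(J2 x) := by
    intro x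
    have h := hq23 (J3 x)
    rw [hJ3, map_neg] at h
    exact h.symm
  have hq12 : ∀ x, J1 (J2 x) = J3 x := by
    intro x
    have h := congrArg J1 (hq13 x)
    rw [hJ1, map_neg] at h
    exact (neg_injective h).symm
  have hq31 : ∀ x, J3 (J1 x) = J2 x := by
    intro x
    have h := hq23 (J1 x)
    rw [hJ1] at h
    have h2' := congrArg J2 h
    rw [hJ2, map_neg] at h2'
    exact neg_injective h2'
  have hq21 : ∀ x, J2 (J1 x) = -(J3 x) := by
    intro x; rw [← hq23 x, hJ2]
  have hq32 : ∀ x, J3 (J2 x) = -(J1 x) := by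
    intro x
    have h : J2 x = -(J1 (J3 x)) := by rw [hq13, neg_neg]
    rw [h, map_neg, hq31, hq23]
  -- skew-symmetry
  have sk1 : ∀ x : V, ⟪J1 x, x⟫ = 0 := by
    intro x
    have h := ho1 x (J1 x)
    rw [hJ1, inner_neg_right] at h
    have hc := real_inner_comm x (J1 x)
    linarith
  have sk2 : ∀ x : V, ⟪J2 x, x⟫ = 0 := by
    intro x
    have h := ho2 x (J2 x)
    rw [hJ2, inner_neg_right] at h
    have hc := real_inner_comm x (J2 x)
    linarith
  have sk3 : ∀ x : V, ⟪J3 x, x⟫ = 0 := by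
    intro x
    have h := ho3 x (J3 x)
    rw [hJ3, inner_neg_right] at h
    have hc := real_inner_comm x (J3 x)
    linarith
  have skv1 : ⟪v, J1 v⟫ = 0 := by rw [real_inner_comm]; exact sk1 v
  have skv2 : ⟪v, J2 v⟫ = 0 := by rw [real_inner_comm]; exact sk2 v
  have skv3 : ⟪v, J3 v⟫ = 0 := by rw [real_inner_comm]; exact sk3 v
  -- the 18 inner products
  set n : ℝ := ⟪v, v⟫ with hn
  have A01 : ⟪J1 v, J1 v⟫ = n := ho1 v v
  have A23 : ⟪J1 (J2 v), J3 v⟫ = n := by rw [hq12]; exact ho3 v v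
  have A02 : ⟪J1 v, J2 v⟫ = 0 := by
    have h : J2 v = -(J1 (J3 v)) := by rw [hq13, neg_neg]
    rw [h, inner_neg_right, ho1, skv3, neg_zero]
  have A03 : ⟪J1 v, J3 v⟫ = 0 := by
    rw [← hq12 v, ho1, skv2]
  have A12 : ⟪J1 (J1 v), J2 v⟫ = 0 := by rw [hJ1, inner_neg_left, skv2, neg_zero]
  have A13 : ⟪J1 (J1 v), J3 v⟫ = 0 := by rw [hJ1, inner_neg_left, skv3, neg_zero]
  have B01 : ⟪J2 v, J1 v⟫ = 0 := by rw [← hq23 v, ho2, skv3]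
  have B23 : ⟪J2 (J2 v), J3 v⟫ = 0 := by rw [hJ2, inner_neg_left, skv3, neg_zero]
  have B02 : ⟪J2 v, J2 v⟫ = n := ho2 v v
  have B13 : ⟪J2 (J1 v), J3 v⟫ = -n := by
    rw [hq21, inner_neg_left, ho3]
  have B03 : ⟪J2 v, J3 v⟫ = 0 := by
    have h : J3 v = -(J2 (J1 v)) := by rw [hq21, neg_neg]
    rw [h, inner_neg_right, ho2, skv1, neg_zero]
  have B12 : ⟪J2 (J1 v), J2 v⟫ = 0 := by rw [ho2]; exact sk1 v
  have C01 : ⟪J3 v, J1 v⟫ = 0 := by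
    have h : J1 v = -(J3 (J2 v)) := by rw [hq32, neg_neg]
    rw [h, inner_neg_right, ho3, skv2, neg_zero]
  have C23 : ⟪J3 (J2 v), J3 v⟫ = 0 := by rw [ho3]; exact sk2 v
  have C02 : ⟪J3 v, J2 v⟫ = 0 := by rw [← hq31 v, ho3, skv1]
  have C13 : ⟪J3 (J1 v), J3 v⟫ = 0 := by rw [ho3]; exact sk1 v
  have C03 : ⟪J3 v, J3 v⟫ = n := ho3 v v
  have C12 : ⟪J3 (J1 v), J2 v⟫ = n := by rw [hq31]; exact ho2 v v
  -- specialize and expand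
  have hv' := hv ![J1 v, J2 v, J3 v]
  rw [wedge22, wedge22, wedge22] at hv'
  have w0 : ((Fin.cons v ![J1 v, J2 v, J3 v] : Fin (3 + 1) → V) ∘
      Fin.cast (show 2 + 2 = 3 + 1 by omega)) 0 = v := rfl
  have w1 : ((Fin.cons v ![J1 v, J2 v, J3 v] : Fin (3 + 1) → V) ∘
      Fin.cast (show 2 + 2 = 3 + 1 by omega)) 1 = J1 v := rfl
  have w2 : ((Fin.cons v ![J1 v, J2 v, J3 v] : Fin (3 + 1) → V) ∘
      Fin.cast (show 2 + 2 = 3 + 1 by omega)) 2 = J2 v := rfl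
  have w3 : ((Fin.cons v ![J1 v, J2 v, J3 v] : Fin (3 + 1) → V) ∘
      Fin.cast (show 2 + 2 = 3 + 1 by omega)) 3 = J3 v := rfl
  simp only [w0, w1, w2, w3, Matrix.cons_val_zero, Matrix.cons_val_one, Matrix.head_cons] at hv'
  rw [A01, A23, A02, A03, A12, A13, B01, B23, B02, B13, B03, B12,
      C01, C23, C02, C03, C13, C12] at hv'
  have hnn : (0:ℝ) ≤ n := real_inner_self_nonneg
  have hn0 : n = 0 := by nlinarith [hv']
  have : ⟪v, v⟫ = (0:ℝ) := by rw [← hn]; exact hn0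
  exact inner_self_eq_zero.mp this
end
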